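/- Let μ be a joint distribution of discrete (X,Y) and η : 𝒳 → 𝒰. For any joint distribution μ̃ on 𝒳 × 𝒴 under which X and Y are conditionally independent given η(X), D(μ ‖ μ̃) ≥ I(X;Y|η(X)), where the conditional mutual information is computed under μ. -/

import Mathlib

/-!
Under `ν` the conditional independence factorises `ν(x, y) = ν_X(x) · ν(y | η x)`, so on the
support of `μ` the integrand of `KL μ ν` minus that of `I(X;Y|η X)` splits as
`log (μ_X(x) / ν_X(x)) + log (μ(y | η x) / ν(y | η x))`. Integrating against `μ`, the difference
`D(μ‖ν) - I(X;Y|η X)` is the divergence of the `X`-marginals plus the divergence of the law of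
`(η X, Y)` from `ν(y | u) μ_U(u)`; both are nonnegative by Gibbs' inequality
`p - q ≤ p log (p / q)`.
-/

open Finset

noncomputable section

/-- Marginal distribution of the first coordinate of a joint distribution. -/
def margX {X Y : Type*} [Fintype Y] (μ : X → Y → ℝ) (x : X) : ℝ := ∑ y, μ x y

/-- Marginal distribution of the second coordinate. -/
def margY {X Y : Type*} [Fintype X] (μ : X → Y → ℝ) (y : Y) : ℝ := ∑ x, μ x y

/-- Distribution of `U = η X`. -/
def margU {X Y U : Type*} [Fintype X] [Fintype Y] [DecidableEq U]
    (μ : X → Y → ℝ) (η : X → U) (u : U) : ℝ :=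
  ∑ x, if η x = u then margX μ x else 0

/-- Joint probability `P(Y = y, η X = u)`. -/
def margYU {X Y U : Type*} [Fintype X] [DecidableEq U]
    (μ : X → Y → ℝ) (η : X → U) (y : Y) (u : U) : ℝ :=
  ∑ x, if η x = u then μ x y else 0

/-- Joint distribution of the pair `(η X, Y)`. -/
def jointUY {X Y U : Type*} [Fintype X] [DecidableEq U]
    (μ : X → Y → ℝ) (η : X → U) : U → Y → ℝ :=
  fun u y => margYU μ η y u

/-- Shannon mutual information `I(X;Y)` of a joint distribution (natural log). -/
def MI {X Y : Type*} [Fintype X] [Fintype Y] (μ : X → Y → ℝ) : ℝ :=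
  ∑ x, ∑ y, μ x y * Real.log (μ x y / (margX μ x * margY μ y))

/-- Conditional Shannon entropy `H(Y|X)`. -/
def condEnt {X Y : Type*} [Fintype X] [Fintype Y] (μ : X → Y → ℝ) : ℝ :=
  -∑ x, ∑ y, μ x y * Real.log (μ x y / margX μ x)

/-- Conditional mutual information `I(X;Y|U)` where `U = η X` is a deterministic
function of `X`. -/
def condMI {X Y U : Type*} [Fintype X] [Fintype Y] [DecidableEq U]
    (μ : X → Y → ℝ) (η : X → U) : ℝ :=
  ∑ x, ∑ y, μ x y *
    Real.log (μ x y * margU μ η (η x) / (margX μ x * margYU μ η y (η x)))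

/-- `μ` is a probability distribution on `X × Y`. -/
def IsDist {X Y : Type*} [Fintype X] [Fintype Y] (μ : X → Y → ℝ) : Prop :=
  (∀ x y, 0 ≤ μ x y) ∧ ∑ x, ∑ y, μ x y = 1

/-- `X` and `Y` are conditionally independent given `U = η X`: for every `u` with
`P(U = u) > 0`, `P(X = x, Y = y | U = u) = P(X = x | U = u) · P(Y = y | U = u)`
(stated multiplied through by `P(U = u)²`). -/
def CondIndep {X Y U : Type*} [Fintype X] [Fintype Y] [DecidableEq U]
    (μ : X → Y → ℝ) (η : X → U) : Prop :=
  ∀ u, 0 < margU μ η u → ∀ x y,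
    (if η x = u then μ x y else 0) * margU μ η u =
      (if η x = u then margX μ x else 0) * margYU μ η y u

/-- Cross-entropy risk `E_{(X,Y)∼μ}[− log v(Y|X)]` of a predictive conditional
distribution `v`. -/
def risk {X Y : Type*} [Fintype X] [Fintype Y] (μ : X → Y → ℝ) (v : X → Y → ℝ) : ℝ :=
  ∑ x, ∑ y, μ x y * (-Real.log (v x y))

/-- Kullback–Leibler divergence between two joint distributions on `X × Y`. -/
def KL {X Y : Type*} [Fintype X] [Fintype Y] (μ ν : X → Y → ℝ) : ℝ :=
  ∑ x, ∑ y, μ x y * Real.log (μ x y / ν x y)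

/-- Averaged conditional KL divergence `D(μ_{Y|X} ‖ v | μ_X)`. -/
def avgKL {X Y : Type*} [Fintype X] [Fintype Y] (μ : X → Y → ℝ) (v : X → Y → ℝ) : ℝ :=
  ∑ x, margX μ x * ∑ y,
    (μ x y / margX μ x) * Real.log ((μ x y / margX μ x) / v x y)

/-- Averaged conditional KL divergence in the latent domain:
`D(μ_{Y|U} ‖ v | μ_U)` for the encoder `η`. -/
def decKL {X Y U : Type*} [Fintype X] [Fintype Y] [Fintype U] [DecidableEq U]
    (μ : X → Y → ℝ) (η : X → U) (v : U → Y → ℝ) : ℝ :=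
  ∑ u, margU μ η u * ∑ y,
    (margYU μ η y u / margU μ η u) *
      Real.log ((margYU μ η y u / margU μ η u) / v u y)

open Real

lemma sub_le_mul_log_div {p q : ℝ} (hp : 0 ≤ p) (hq : 0 ≤ q) (hpq : q = 0 → p = 0) :
    p - q ≤ p * log (p / q) := by
  rcases hp.eq_or_lt with rfl | hp
  · simpa using hq
  have hq : 0 < q := hq.lt_of_ne fun h => hp.ne' (hpq h.symm)
  calc p - q = p * (1 - (p / q)⁻¹) := by field_simp
    _ ≤ p * log (p / q) := by gcongr; exact one_sub_inv_le_log_of_pos (by positivity)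

lemma sum_mul_log_div_nonneg {ι : Type*} {s : Finset ι} {p q : ι → ℝ}
    (hp : ∀ i, 0 ≤ p i) (hq : ∀ i, 0 ≤ q i) (hpq : ∀ i, q i = 0 → p i = 0)
    (hsum : ∑ i ∈ s, q i ≤ ∑ i ∈ s, p i) :
    0 ≤ ∑ i ∈ s, p i * log (p i / q i) :=
  calc 0 ≤ ∑ i ∈ s, (p i - q i) := by rw [sum_sub_distrib]; linarith
    _ ≤ _ := sum_le_sum fun i _ => sub_le_mul_log_div (hp i) (hq i) (hpq i)

lemma sum_eq_zero_of_absolutelyContinuous {ι : Type*} {s : Finset ι} {p q : ι → ℝ}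
    (hq : ∀ i, 0 ≤ q i) (hpq : ∀ i, q i = 0 → p i = 0) (hs : ∑ i ∈ s, q i = 0) :
    ∑ i ∈ s, p i = 0 :=
  sum_eq_zero fun i hi => hpq i ((sum_eq_zero_iff_of_nonneg fun i _ => hq i).1 hs i hi)

lemma KL_nonneg {X Y : Type*} [Fintype X] [Fintype Y] {μ ν : X → Y → ℝ} (hμ : ∀ x y, 0 ≤ μ x y)
    (hν : ∀ x y, 0 ≤ ν x y) (habs : ∀ x y, ν x y = 0 → μ x y = 0)
    (hsum : ∑ x, ∑ y, ν x y ≤ ∑ x, ∑ y, μ x y) : 0 ≤ KL μ ν := by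
  unfold KL
  simp only [← Fintype.sum_prod_type'] at hsum ⊢
  exact sum_mul_log_div_nonneg (fun i => hμ i.1 i.2) (fun i => hν i.1 i.2)
    (fun i => habs i.1 i.2) hsum

/-- The law of `(η X, Y)` that keeps the conditional law of `Y` given `η X` from `ν` and the
law of `η X` from `μ`. -/
def reweightUY {X Y U : Type*} [Fintype X] [Fintype Y] [DecidableEq U]
    (μ ν : X → Y → ℝ) (η : X → U) (u : U) (y : Y) : ℝ :=
  margYU ν η y u * margU μ η u / margU ν η u

section Marginals

variable {X Y U : Type*} [DecidableEq U] (η : X → U)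

lemma margX_nonneg [Fintype Y] {μ : X → Y → ℝ} (hμ : ∀ x y, 0 ≤ μ x y) (x : X) :
    0 ≤ margX μ x :=
  sum_nonneg fun y _ => hμ x y

lemma le_margX [Fintype Y] {μ : X → Y → ℝ} (hμ : ∀ x y, 0 ≤ μ x y) (x : X) (y : Y) :
    μ x y ≤ margX μ x :=
  single_le_sum (fun y _ => hμ x y) (mem_univ y)

variable [Fintype X]

lemma margYU_nonneg {μ : X → Y → ℝ} (hμ : ∀ x y, 0 ≤ μ x y) (y : Y) (u : U) :
    0 ≤ margYU μ η y u :=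
  sum_nonneg fun x _ => by split_ifs <;> simp [hμ x y]

lemma le_margYU {μ : X → Y → ℝ} (hμ : ∀ x y, 0 ≤ μ x y) (x : X) (y : Y) :
    μ x y ≤ margYU μ η y (η x) := by
  have := single_le_sum (f := fun x' => if η x' = η x then μ x' y else 0)
    (fun x' _ => by split_ifs <;> simp [hμ x' y]) (mem_univ x)
  simpa [margYU] using this

lemma margYU_eq_zero_of_absolutelyContinuous {μ ν : X → Y → ℝ} (hν : ∀ x y, 0 ≤ ν x y)
    (habs : ∀ x y, ν x y = 0 → μ x y = 0) {y : Y} {u : U} (h : margYU ν η y u = 0) :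
    margYU μ η y u = 0 :=
  sum_eq_zero_of_absolutelyContinuous (fun x => by split_ifs <;> simp [hν x y])
    (fun x => by split_ifs; exacts [habs x y, id]) h

variable [Fintype Y]

lemma sum_margYU (μ : X → Y → ℝ) (u : U) : ∑ y, margYU μ η y u = margU μ η u := by
  unfold margYU margU margX
  rw [Finset.sum_comm]
  exact sum_congr rfl fun x _ => by split_ifs <;> simp

lemma margYU_le_margU {μ : X → Y → ℝ} (hμ : ∀ x y, 0 ≤ μ x y) (y : Y) (u : U) :
    margYU μ η y u ≤ margU μ η u :=
  sum_margYU η μ u ▸ single_le_sum (fun y _ => margYU_nonneg η hμ y u) (mem_univ y)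

lemma sum_sum_mul_comp_eq_sum_sum_margYU [Fintype U] (μ : X → Y → ℝ) (g : U → Y → ℝ) :
    ∑ x, ∑ y, μ x y * g (η x) y = ∑ u, ∑ y, margYU μ η y u * g u y := by
  simp only [margYU, Finset.sum_mul, ite_mul, zero_mul]
  conv_rhs => enter [2, u]; rw [Finset.sum_comm]
  conv_rhs => rw [Finset.sum_comm]
  simp

variable {μ ν : X → Y → ℝ}

lemma sum_reweightUY_le (hμ : ∀ x y, 0 ≤ μ x y) (u : U) :
    ∑ y, reweightUY μ ν η u y ≤ margU μ η u := by
  simp only [reweightUY, ← Finset.sum_div, ← Finset.sum_mul, sum_margYU]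
  rcases eq_or_ne (margU ν η u) 0 with h | h
  · rw [h, div_zero, ← sum_margYU]
    exact sum_nonneg fun y _ => margYU_nonneg η hμ y u
  · rw [mul_div_cancel_left₀ _ h]

lemma margYU_eq_zero_of_reweightUY_eq_zero (hμ : ∀ x y, 0 ≤ μ x y) (hν : ∀ x y, 0 ≤ ν x y)
    (habs : ∀ x y, ν x y = 0 → μ x y = 0) {u : U} {y : Y} (h : reweightUY μ ν η u y = 0) :
    margYU μ η y u = 0 := by
  have hU : margU ν η u = 0 → margU μ η u = 0 := fun hu => by
    rw [← sum_margYU] at hu ⊢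
    exact sum_eq_zero_of_absolutelyContinuous (fun y => margYU_nonneg η hν y u)
      (fun y => margYU_eq_zero_of_absolutelyContinuous η hν habs) hu
  rcases div_eq_zero_iff.1 h with h | h
  · rcases mul_eq_zero.1 h with h | h
    · exact margYU_eq_zero_of_absolutelyContinuous η hν habs h
    · exact le_antisymm (h ▸ margYU_le_margU η hμ y u) (margYU_nonneg η hμ y u)
  · exact le_antisymm (hU h ▸ margYU_le_margU η hμ y u) (margYU_nonneg η hμ y u)

lemma KL_jointUY_reweightUY_nonneg [Fintype U] (hμ : ∀ x y, 0 ≤ μ x y)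
    (hν : ∀ x y, 0 ≤ ν x y) (habs : ∀ x y, ν x y = 0 → μ x y = 0) :
    0 ≤ KL (jointUY μ η) (reweightUY μ ν η) := by
  refine KL_nonneg (fun u y => margYU_nonneg η hμ y u)
    (fun u y => div_nonneg (mul_nonneg (margYU_nonneg η hν y u)
      (sum_margYU η μ u ▸ sum_nonneg fun y _ => margYU_nonneg η hμ y u))
      (sum_margYU η ν u ▸ sum_nonneg fun y _ => margYU_nonneg η hν y u))
    (fun u y => margYU_eq_zero_of_reweightUY_eq_zero η hμ hν habs) ?_
  simp only [jointUY, sum_margYU]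
  exact sum_le_sum fun u _ => sum_reweightUY_le η hμ u

lemma log_div_sub_log_condMI_eq (hμ : ∀ x y, 0 ≤ μ x y) (hν : ∀ x y, 0 ≤ ν x y)
    (hci : CondIndep ν η) (habs : ∀ x y, ν x y = 0 → μ x y = 0) {x : X} {y : Y}
    (hxy : 0 < μ x y) :
    log (μ x y / ν x y) - log (μ x y * margU μ η (η x) / (margX μ x * margYU μ η y (η x)))
      = log (margX μ x / margX ν x) + log (margYU μ η y (η x) / reweightUY μ ν η (η x) y) := by
  have hνxy : 0 < ν x y := (hν x y).lt_of_ne fun h => hxy.ne' (habs x y h.symm)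
  have hμX := hxy.trans_le (le_margX hμ x y)
  have hμYU := hxy.trans_le (le_margYU η hμ x y)
  have hμU := hμYU.trans_le (margYU_le_margU η hμ y (η x))
  have hνX := hνxy.trans_le (le_margX hν x y)
  have hνYU := hνxy.trans_le (le_margYU η hν x y)
  have hνU := hνYU.trans_le (margYU_le_margU η hν y (η x))
  have hfactor := hci (η x) hνU x y
  simp only [if_true] at hfactor
  have hrw : 0 < reweightUY μ ν η (η x) y := by unfold reweightUY; positivity
  have hsplit : μ x y / ν x y = μ x y * margU μ η (η x) / (margX μ x * margYU μ η y (η x)) *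
      (margX μ x / margX ν x * (margYU μ η y (η x) / reweightUY μ ν η (η x) y)) := by
    unfold reweightUY
    field_simp
    linear_combination -hfactor
  rw [hsplit, log_mul (by positivity) (by positivity), log_mul (by positivity) (by positivity)]
  ring

lemma KL_sub_condMI_eq [Fintype U] (hμ : ∀ x y, 0 ≤ μ x y) (hν : ∀ x y, 0 ≤ ν x y)
    (hci : CondIndep ν η) (habs : ∀ x y, ν x y = 0 → μ x y = 0) :
    KL μ ν - condMI μ η = ∑ x, margX μ x * log (margX μ x / margX ν x)
      + KL (jointUY μ η) (reweightUY μ ν η) := by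
  have hterm : ∀ x y, μ x y * log (μ x y / ν x y)
      - μ x y * log (μ x y * margU μ η (η x) / (margX μ x * margYU μ η y (η x)))
      = μ x y * log (margX μ x / margX ν x)
        + μ x y * log (margYU μ η y (η x) / reweightUY μ ν η (η x) y) := fun x y => by
    rcases (hμ x y).eq_or_lt with h | h
    · simp [← h]
    · rw [← mul_sub, log_div_sub_log_condMI_eq η hμ hν hci habs h, mul_add]
  unfold KL condMI
  simp only [← Finset.sum_sub_distrib, hterm, Finset.sum_add_distrib, ← Finset.sum_mul]
  rw [sum_sum_mul_comp_eq_sum_sum_margYU η μ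
    (fun u y => log (margYU μ η y u / reweightUY μ ν η u y))]
  rfl

end Marginals

/-- for any distribution `ν` under which `X ⟂ Y | η(X)` (and w.r.t.
which `μ` is absolutely continuous), `D(μ‖ν) ≥ I(X;Y|η(X))` (computed under `μ`). -/
theorem stmt9 {X Y U : Type*} [Fintype X] [Fintype Y] [Fintype U] [DecidableEq U]
    (μ ν : X → Y → ℝ) (η : X → U) (hμ : IsDist μ) (hν : IsDist ν)
    (hci : CondIndep ν η) (habs : ∀ x y, ν x y = 0 → μ x y = 0) :
    condMI μ η ≤ KL μ ν := by
  obtain ⟨hμ0, hμ1⟩ := hμ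
  obtain ⟨hν0, hν1⟩ := hν
  have hX : 0 ≤ ∑ x, margX μ x * log (margX μ x / margX ν x) :=
    sum_mul_log_div_nonneg (margX_nonneg hμ0) (margX_nonneg hν0)
      (fun x => sum_eq_zero_of_absolutelyContinuous (hν0 x) (habs x))
      (by simp only [margX, hμ1, hν1, le_refl])
  have hUY := KL_jointUY_reweightUY_nonneg η hμ0 hν0 habs
  linarith [KL_sub_condMI_eq η hμ0 hν0 hci habs]
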